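/- arXiv:2404.05714 — 2 statements merged into one kernel-verified Lean document; each statement's English description precedes it below -/
import Mathlib

section
/- Helstrom bound (success direction): for density matrices ρ, σ with uniform prior, the optimal success probability of discriminating them by a two-outcome POVM {M, I − M} with 0 ≤ M ≤ I equals (1/2)(1 + (1/2)‖ρ − σ‖₁); in particular any discrimination strategy has failure probability at least (1 − (1/2)‖ρ − σ‖₁)/2. -/
open Matrix
open scoped ComplexOrder

/-- Trace norm of a complex matrix: the trace of `√(AᴴA)` (the sum of singular values). -/
noncomputable def traceNorm {d : Type*} [Fintype d] [DecidableEq d] (A : Matrix d d ℂ) : ℝ :=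
  (((Matrix.posSemidef_conjTranspose_mul_self A).1.eigenvectorUnitary : Matrix d d ℂ) *
    diagonal (((↑) : ℝ → ℂ) ∘ (√·) ∘ (Matrix.posSemidef_conjTranspose_mul_self A).1.eigenvalues) *
    (star (Matrix.posSemidef_conjTranspose_mul_self A).1.eigenvectorUnitary : Matrix d d ℂ)).trace.re

/-!
Write `Δ = ρ - σ = Δ⁺ - Δ⁻`. The success probability of `{M, 1 - M}` is `1/2 + re tr(MΔ)/2`,
and for `0 ≤ M ≤ 1` we have `tr(MΔ) ≤ tr(MΔ⁺) ≤ tr Δ⁺`, because the trace of a product of two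
positive semidefinite matrices is nonnegative. The spectral projection of `Δ` onto its
nonnegative eigenvalues attains this bound. Finally `|Δ| + Δ = 2Δ⁺` and `tr Δ = 0` give
`tr Δ⁺ = ‖Δ‖₁/2`.
-/

open scoped MatrixOrder

section

variable {d 𝕜 : Type*} [Fintype d] [DecidableEq d] [RCLike 𝕜]

theorem traceNorm_eq_re_trace_abs (A : Matrix d d ℂ) : traceNorm A = (CFC.abs A).trace.re := by
  have hA := posSemidef_conjTranspose_mul_self A
  rw [traceNorm, CFC.abs, CFC.sqrt_eq_real_sqrt (star A * A) hA.nonneg, cfcₙ_eq_cfc]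
  exact congrArg (fun B => B.trace.re) (hA.1.cfc_eq Real.sqrt).symm

namespace Matrix

theorem PosSemidef.trace_mul_nonneg {X Y : Matrix d d 𝕜} (hX : X.PosSemidef)
    (hY : Y.PosSemidef) : 0 ≤ (X * Y).trace := by
  have hsqrt : (CFC.sqrt X)ᴴ = CFC.sqrt X := (CFC.sqrt_nonneg X).isSelfAdjoint
  rw [← CFC.sqrt_mul_sqrt_self X hX.nonneg, Matrix.mul_assoc, trace_mul_comm, Matrix.mul_assoc,
    ← Matrix.mul_assoc]
  nth_rw 1 [← hsqrt]
  exact (hY.conjTranspose_mul_mul_same _).trace_nonneg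

namespace IsHermitian

variable {A : Matrix d d 𝕜}

theorem trace_mul_le_trace_posPart (hA : A.IsHermitian) {M : Matrix d d 𝕜}
    (hM : M.PosSemidef) (hM1 : (1 - M).PosSemidef) : (M * A).trace ≤ (A⁺).trace :=
  calc (M * A).trace = (M * A⁺).trace - (M * A⁻).trace := by
        conv_lhs => rw [← CFC.posPart_sub_negPart A hA.isSelfAdjoint]
        rw [Matrix.mul_sub, trace_sub]
    _ ≤ (M * A⁺).trace := sub_le_self _ (hM.trace_mul_nonneg (CFC.negPart_nonneg A).posSemidef)
    _ = (A⁺).trace - ((1 - M) * A⁺).trace := by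
        rw [Matrix.sub_mul, Matrix.one_mul, trace_sub, sub_sub_cancel]
    _ ≤ (A⁺).trace := sub_le_self _ (hM1.trace_mul_nonneg (CFC.posPart_nonneg A).posSemidef)

/-- The witness is the spectral projection of `A` onto its nonnegative eigenvalues. -/
theorem exists_mul_eq_posPart (hA : A.IsHermitian) :
    ∃ P : Matrix d d 𝕜, P.PosSemidef ∧ (1 - P).PosSemidef ∧ P * A = A⁺ := by
  set f : ℝ → ℝ := fun x => if 0 ≤ x then 1 else 0
  have hf : ContinuousOn f (spectrum ℝ A) := A.finite_real_spectrum.continuousOn _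
  refine ⟨cfc f A, ?_, ?_, ?_⟩
  · exact (cfc_nonneg fun x _ => by simp only [f]; split_ifs <;> norm_num).posSemidef
  · exact Matrix.le_iff.mp (cfc_le_one f A fun x _ => by simp only [f]; split_ifs <;> norm_num)
  · rw [CFC.posPart_def, cfcₙ_eq_cfc]
    nth_rw 2 [← cfc_id' ℝ A]
    rw [← cfc_mul f (fun x => x) A hf]
    refine cfc_congr fun x _ => ?_
    simp only [f]
    split_ifs with hx
    · rw [one_mul, posPart_of_nonneg hx]
    · rw [zero_mul, posPart_eq_zero.mpr (le_of_not_ge hx)]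

theorem isGreatest_re_trace_mul (hA : A.IsHermitian) :
    IsGreatest {t : ℝ | ∃ M : Matrix d d 𝕜, M.PosSemidef ∧ (1 - M).PosSemidef ∧
      t = RCLike.re (M * A).trace} (RCLike.re (A⁺).trace) := by
  obtain ⟨P, hP, hP1, hPA⟩ := hA.exists_mul_eq_posPart
  refine ⟨⟨P, hP, hP1, by rw [hPA]⟩, ?_⟩
  rintro _ ⟨M, hM, hM1, rfl⟩
  exact RCLike.re_le_re (hA.trace_mul_le_trace_posPart hM hM1)

end IsHermitian

theorem IsHermitian.re_trace_posPart_of_trace_eq_zero {A : Matrix d d ℂ} (hA : A.IsHermitian)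
    (hA0 : A.trace = 0) : (A⁺).trace.re = traceNorm A / 2 := by
  have h := congrArg (fun B : Matrix d d ℂ => B.trace.re) (CFC.abs_add_self A hA.isSelfAdjoint)
  simp only [two_smul, trace_add, hA0, Complex.add_re, add_zero] at h
  rw [traceNorm_eq_re_trace_abs, h]
  ring

end Matrix

theorem re_trace_mul_add_re_trace_one_sub_mul {ρ σ : Matrix d d ℂ} (hσ1 : σ.trace = 1)
    (M : Matrix d d ℂ) :
    (M * ρ).trace.re / 2 + ((1 - M) * σ).trace.re / 2 = 1 / 2 + (M * (ρ - σ)).trace.re / 2 := by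
  rw [Matrix.sub_mul, Matrix.one_mul, Matrix.mul_sub, trace_sub, trace_sub, hσ1]
  simp only [Complex.sub_re, Complex.one_re]
  ring

end

/-- Helstrom bound: for density matrices `ρ, σ` under a uniform prior, the optimal success
probability of a two-outcome POVM `{M, I - M}` equals `(1 + ½‖ρ - σ‖₁)/2`; in particular
every strategy has failure probability at least `(1 - ½‖ρ - σ‖₁)/2`. -/
theorem stmt6 {d : Type*} [Fintype d] [DecidableEq d] (ρ σ : Matrix d d ℂ)
    (hρ : ρ.PosSemidef) (hρ1 : ρ.trace = 1)
    (hσ : σ.PosSemidef) (hσ1 : σ.trace = 1) :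
    IsGreatest {psucc : ℝ | ∃ M : Matrix d d ℂ, M.PosSemidef ∧ (1 - M).PosSemidef ∧
        psucc = ((M * ρ).trace).re / 2 + (((1 - M) * σ).trace).re / 2}
      ((1 + traceNorm (ρ - σ) / 2) / 2) ∧
    ∀ M : Matrix d d ℂ, M.PosSemidef → (1 - M).PosSemidef →
      (1 - traceNorm (ρ - σ) / 2) / 2 ≤
        1 - (((M * ρ).trace).re / 2 + (((1 - M) * σ).trace).re / 2) := by
  have hΔ : (ρ - σ).IsHermitian := hρ.1.sub hσ.1
  have hΔ0 : (ρ - σ).trace = 0 := by rw [trace_sub, hρ1, hσ1, sub_self]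
  obtain ⟨⟨M₀, hM₀, hM₀1, hM₀opt⟩, hbound⟩ := hΔ.isGreatest_re_trace_mul
  have hopt : (M₀ * (ρ - σ)).trace.re = traceNorm (ρ - σ) / 2 :=
    hM₀opt.symm.trans (hΔ.re_trace_posPart_of_trace_eq_zero hΔ0)
  have hle {M : Matrix d d ℂ} (hM : M.PosSemidef) (hM1 : (1 - M).PosSemidef) :
      (M * (ρ - σ)).trace.re ≤ traceNorm (ρ - σ) / 2 :=
    (hbound ⟨M, hM, hM1, rfl⟩).trans_eq (hΔ.re_trace_posPart_of_trace_eq_zero hΔ0)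
  simp only [re_trace_mul_add_re_trace_one_sub_mul hσ1]
  refine ⟨⟨⟨M₀, hM₀, hM₀1, by rw [hopt]; ring⟩, ?_⟩, fun M hM hM1 => ?_⟩
  · rintro _ ⟨M, hM, hM1, rfl⟩
    linarith [hle hM hM1]
  · linarith [hle hM hM1]
end

section
/- Classical analogue for shallow Markov chains: let q be a probability distribution on A₁ × ⋯ × Aₙ obtained by applying k layers of two-coordinate stochastic maps (each coordinate used at most once per layer) to a point mass. For a linear functional L(q) = ∑ᵢ p_{sᵢ} E_q[f_{sᵢ}] with |f_{sᵢ}| ≤ 1, supports of size ≤ ℓ, and each support intersecting at most D others, the empirical estimator from a single sample x ∼ q, Y = ∑ᵢ p_{sᵢ} f_{sᵢ}(x), satisfies E Y = L(q) and Var(Y) ≤ C(k,ℓ,D) ∑ᵢ p_{sᵢ}². -/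
/-- A real matrix on the product state space acts non-trivially only on coordinates in `S`. -/
def CSupportedOn {n : ℕ} {A : Fin n → Type*} [∀ i, DecidableEq (A i)]
    (M : Matrix (∀ i, A i) (∀ i, A i) ℝ) (S : Finset (Fin n)) : Prop :=
  ∃ f : (∀ i : S, A i.1) → (∀ i : S, A i.1) → ℝ,
    ∀ x y, M x y = f (fun i => x i.1) (fun i => y i.1) *
      (if ∀ i, i ∉ S → x i = y i then 1 else 0)

/-- A (column-)stochastic matrix: nonnegative entries, each column summing to `1`. -/
def IsStochastic {n : ℕ} {A : Fin n → Type*} [∀ i, Fintype (A i)]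
    (M : Matrix (∀ i, A i) (∀ i, A i) ℝ) : Prop :=
  (∀ x y, 0 ≤ M x y) ∧ ∀ y, ∑ x, M x y = 1

/-- A single layer of local Markov chains: a product of stochastic maps, each acting on at
most two coordinates, with pairwise disjoint supports (each coordinate used at most once). -/
def CIsLayer {n : ℕ} {A : Fin n → Type*} [∀ i, Fintype (A i)] [∀ i, DecidableEq (A i)]
    (M : Matrix (∀ i, A i) (∀ i, A i) ℝ)
    (gates : List (Matrix (∀ i, A i) (∀ i, A i) ℝ × Finset (Fin n))) : Prop :=
  M = (gates.map Prod.fst).prod ∧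
  (∀ g ∈ gates, IsStochastic g.1 ∧ CSupportedOn g.1 g.2 ∧ g.2.card ≤ 2) ∧
  gates.Pairwise (fun g h => Disjoint g.2 h.2)

open scoped Classical

/-!
Work in the Heisenberg picture: with `P` the product of all layers, `E_q[F] = (F ᵥ* P) x₀`.
A stochastic gate supported on `G` fixes every observable that does not depend on `G`, and it
turns an observable depending on `S` into one depending on `S ∪ G`. Hence it acts
multiplicatively on `F * H` as soon as it does not touch the supports of both `F` and `H`.
Propagating this through the layers, the evolved `fᵢ` depends only on the lightcone of `sᵢ`
(growing by a factor `≤ 2` per layer), and `fᵢ`, `fⱼ` are uncorrelated under `q` whenever their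
lightcones are disjoint. In `Var Y = ∑ᵢⱼ pᵢ pⱼ Cov(fᵢ, fⱼ)` each `i` therefore has at most
`ℓ 4ᵏ D` partners `j` with a nonzero term, each term is bounded via `|Cov| ≤ 2` and
`2 |pᵢ pⱼ| ≤ pᵢ² + pⱼ²`, so `Var Y ≤ 2 ℓ 4ᵏ D ∑ᵢ pᵢ²`.
-/

open Finset Matrix Function

section Variance

variable {X ι : Type*} [Fintype X] [Fintype ι] {q : X → ℝ}

def covar (q F H : X → ℝ) : ℝ :=
  ∑ x, q x * (F x * H x) - (∑ x, q x * F x) * ∑ x, q x * H x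

lemma sum_mul_sum_mul_comm (q : X → ℝ) (p : ι → ℝ) (f : ι → X → ℝ) :
    ∑ x, q x * ∑ i, p i * f i x = ∑ i, p i * ∑ x, q x * f i x := by
  simp only [mul_sum]
  rw [sum_comm]
  exact sum_congr rfl fun i _ => sum_congr rfl fun x _ => by ring

lemma covar_eq_sum_mul_sub_mul_sub (hq : ∑ x, q x = 1) (F H : X → ℝ) :
    covar q F H =
      ∑ x, q x * ((F x - ∑ y, q y * F y) * (H x - ∑ y, q y * H y)) := by
  set a := ∑ y, q y * F y
  set b := ∑ y, q y * H y
  have hexpand : ∀ x, q x * ((F x - a) * (H x - b)) =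
      q x * (F x * H x) - b * (q x * F x) - a * (q x * H x) + a * b * q x := fun x => by ring
  simp only [hexpand, sum_add_distrib, sum_sub_distrib, ← mul_sum, hq, covar]
  ring

lemma sum_mul_sub_sq_eq_sum_covar (hq : ∑ x, q x = 1) (p : ι → ℝ) (f : ι → X → ℝ) :
    ∑ x, q x * (∑ i, p i * f i x - ∑ i, p i * ∑ y, q y * f i y) ^ 2 =
      ∑ i, ∑ j, p i * p j * covar q (f i) (f j) := by
  have hcentre : ∀ x, ∑ i, p i * f i x - ∑ i, p i * ∑ y, q y * f i y =
      ∑ i, p i * (f i x - ∑ y, q y * f i y) := fun x => by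
    simp only [mul_sub, sum_sub_distrib]
  simp only [hcentre, covar_eq_sum_mul_sub_mul_sub hq]
  simp only [sq, sum_mul_sum]
  simp only [mul_sum]
  rw [sum_comm]
  refine sum_congr rfl fun i _ => ?_
  rw [sum_comm]
  exact sum_congr rfl fun j _ => sum_congr rfl fun x _ => by ring

lemma abs_covar_le_two (hq0 : ∀ x, 0 ≤ q x) (hq1 : ∑ x, q x = 1) {F H : X → ℝ}
    (hF : ∀ x, |F x| ≤ 1) (hH : ∀ x, |H x| ≤ 1) : |covar q F H| ≤ 2 := by
  have hE : ∀ G : X → ℝ, (∀ x, |G x| ≤ 1) → |∑ x, q x * G x| ≤ 1 := fun G hG =>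
    calc |∑ x, q x * G x| ≤ ∑ x, q x * |G x| := by
          simpa only [abs_mul, abs_of_nonneg (hq0 _)] using
            abs_sum_le_sum_abs (fun x => q x * G x) univ
      _ ≤ ∑ x, q x * 1 := sum_le_sum fun x _ => mul_le_mul_of_nonneg_left (hG x) (hq0 x)
      _ = 1 := by simp [hq1]
  have hFH : ∀ x, |F x * H x| ≤ 1 := fun x => by
    rw [abs_mul]; exact mul_le_one₀ (hF x) (abs_nonneg _) (hH x)
  calc |covar q F H| ≤ |∑ x, q x * (F x * H x)| + |∑ x, q x * F x| * |∑ x, q x * H x| := by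
        rw [covar, ← abs_mul]; exact abs_sub _ _
    _ ≤ 1 + 1 * 1 := by
        gcongr
        exacts [hE _ hFH, hE _ hF, hE _ hH]
    _ = 2 := by norm_num

lemma sum_sum_mul_mul_le (p : ι → ℝ) {c : ι → ι → ℝ} {K : ℝ} (hc : ∀ i j, |c i j| ≤ K)
    {B : ι → ι → Prop} [DecidableRel B] (hsymm : ∀ i j, B i j → B j i)
    (hzero : ∀ i j, ¬ B i j → c i j = 0)
    {N : ℕ} (hN : ∀ i, #(univ.filter (B i)) ≤ N) :
    ∑ i, ∑ j, p i * p j * c i j ≤ K * N * ∑ i, p i ^ 2 := by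
  rcases isEmpty_or_nonempty ι with hι | ⟨⟨i₀⟩⟩
  · simp
  have hK : 0 ≤ K := (abs_nonneg _).trans (hc i₀ i₀)
  have hterm : ∀ i j, p i * p j * c i j ≤
      K / 2 * ((if B i j then p i ^ 2 else 0) + if B i j then p j ^ 2 else 0) := fun i j => by
    by_cases hB : B i j
    · simp only [hB, if_true]
      calc p i * p j * c i j ≤ |p i * p j * c i j| := le_abs_self _
        _ = |p i| * |p j| * |c i j| := by rw [abs_mul, abs_mul]
        _ ≤ |p i| * |p j| * K := by gcongr; exact hc i j
        _ ≤ K / 2 * (p i ^ 2 + p j ^ 2) := by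
            nlinarith [sq_nonneg (|p i| - |p j|), sq_abs (p i), sq_abs (p j)]
    · simp [hB, hzero i j hB]
  have hrow : ∑ i, ∑ j, (if B i j then p i ^ 2 else 0) ≤ N * ∑ i, p i ^ 2 := by
    rw [mul_sum]
    refine sum_le_sum fun i _ => ?_
    rw [← sum_filter, sum_const, nsmul_eq_mul]
    exact mul_le_mul_of_nonneg_right (Nat.cast_le.2 (hN i)) (sq_nonneg _)
  have hcol : ∑ i, ∑ j, (if B i j then p j ^ 2 else 0) =
      ∑ i, ∑ j, (if B i j then p i ^ 2 else 0) := by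
    rw [sum_comm]
    exact sum_congr rfl fun i _ => sum_congr rfl fun j _ => by
      simp only [show B j i ↔ B i j from ⟨hsymm j i, hsymm i j⟩]
  calc ∑ i, ∑ j, p i * p j * c i j
      ≤ K / 2 * ((∑ i, ∑ j, if B i j then p i ^ 2 else 0) +
          ∑ i, ∑ j, if B i j then p j ^ 2 else 0) := by
        simp only [← sum_add_distrib, mul_sum]
        exact sum_le_sum fun i _ => sum_le_sum fun j _ => hterm i j
    _ ≤ K * N * ∑ i, p i ^ 2 := by
        rw [hcol]
        nlinarith

lemma sum_mul_sub_sq_le (hq0 : ∀ x, 0 ≤ q x) (hq1 : ∑ x, q x = 1) (p : ι → ℝ)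
    {f : ι → X → ℝ} (hf : ∀ i x, |f i x| ≤ 1) {B : ι → ι → Prop} [DecidableRel B]
    (hsymm : ∀ i j, B i j → B j i)
    (hindep : ∀ i j, ¬ B i j → covar q (f i) (f j) = 0) {N : ℕ}
    (hN : ∀ i, #(univ.filter (B i)) ≤ N) :
    ∑ x, q x * (∑ i, p i * f i x - ∑ i, p i * ∑ y, q y * f i y) ^ 2 ≤ 2 * N * ∑ i, p i ^ 2 := by
  rw [sum_mul_sub_sq_eq_sum_covar hq1]
  exact sum_sum_mul_mul_le p (fun i j => abs_covar_le_two hq0 hq1 (hf i) (hf j)) hsymm hindep hN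

end Variance

section Neighbourhood

variable {n : ℕ}

def layerNbhd (gs : List (Finset (Fin n))) (a : Fin n) : Finset (Fin n) :=
  insert a (univ.filter fun b => ∃ G ∈ gs, a ∈ G ∧ b ∈ G)

variable {gs : List (Finset (Fin n))} {G G' : Finset (Fin n)} {a b : Fin n}

lemma eq_of_mem_of_pairwise_disjoint (hgs : gs.Pairwise Disjoint) (hG : G ∈ gs) (hG' : G' ∈ gs)
    (ha : a ∈ G) (ha' : a ∈ G') : G = G' :=
  by_contra fun hne => disjoint_left.1 (hgs.forall hG hG' hne) ha ha'

@[simp]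
lemma mem_layerNbhd : b ∈ layerNbhd gs a ↔ b = a ∨ ∃ G ∈ gs, a ∈ G ∧ b ∈ G := by
  simp [layerNbhd]

lemma self_mem_layerNbhd (gs : List (Finset (Fin n))) (a : Fin n) : a ∈ layerNbhd gs a := by
  simp

lemma subset_layerNbhd (hG : G ∈ gs) (ha : a ∈ G) : G ⊆ layerNbhd gs a :=
  fun _ hb => mem_layerNbhd.2 (Or.inr ⟨G, hG, ha, hb⟩)

lemma mem_layerNbhd_comm : b ∈ layerNbhd gs a ↔ a ∈ layerNbhd gs b := by
  simp only [mem_layerNbhd]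
  grind

lemma layerNbhd_subset_of_mem (hgs : gs.Pairwise Disjoint) (hb : b ∈ layerNbhd gs a) :
    layerNbhd gs b ⊆ layerNbhd gs a := by
  intro c hc
  simp only [mem_layerNbhd] at hb hc ⊢
  obtain rfl | ⟨G, hG, haG, hbG⟩ := hb
  · exact hc
  obtain rfl | ⟨G', hG', hbG', hcG'⟩ := hc
  · exact Or.inr ⟨G, hG, haG, hbG⟩
  obtain rfl := eq_of_mem_of_pairwise_disjoint hgs hG hG' hbG hbG'
  exact Or.inr ⟨G, hG, haG, hcG'⟩

lemma card_layerNbhd_le (hgs : gs.Pairwise Disjoint) (hcard : ∀ G ∈ gs, #G ≤ 2) (a : Fin n) :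
    #(layerNbhd gs a) ≤ 2 := by
  by_cases ha : ∃ G ∈ gs, a ∈ G
  · obtain ⟨G, hG, haG⟩ := ha
    refine (card_le_card fun b hb => ?_).trans (hcard G hG)
    obtain rfl | ⟨G', hG', haG', hbG'⟩ := mem_layerNbhd.1 hb
    · exact haG
    · rwa [eq_of_mem_of_pairwise_disjoint hgs hG hG' haG haG']
  · have : layerNbhd gs a = {a} := by
      ext b
      simp only [mem_layerNbhd, mem_singleton]
      grind
    simp [this]

def chainNbhd : List (Fin n → Finset (Fin n)) → Fin n → Finset (Fin n)
  | [], a => {a}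
  | nb :: nbs, a => (nb a).biUnion (chainNbhd nbs)

variable {l : List (Fin n → Finset (Fin n))} {d : ℕ}

lemma self_mem_chainNbhd (h : ∀ nb ∈ l, ∀ a, a ∈ nb a) (a : Fin n) : a ∈ chainNbhd l a := by
  induction l generalizing a with
  | nil => exact mem_singleton_self a
  | cons nb nbs ih =>
    exact mem_biUnion.2 ⟨a, h nb (by simp) a, ih (fun nb' h' => h nb' (by simp [h'])) a⟩

lemma card_chainNbhd_le (h : ∀ nb ∈ l, ∀ a, #(nb a) ≤ d) (a : Fin n) :
    #(chainNbhd l a) ≤ d ^ l.length := by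
  induction l generalizing a with
  | nil => simp [chainNbhd]
  | cons nb nbs ih =>
    calc #((nb a).biUnion (chainNbhd nbs)) ≤ #(nb a) * d ^ nbs.length :=
          card_biUnion_le_card_mul _ _ _ fun b _ => ih (fun nb' h' => h nb' (by simp [h'])) b
      _ ≤ d * d ^ nbs.length := Nat.mul_le_mul_right _ (h nb (by simp) a)
      _ = d ^ (nb :: nbs).length := by rw [List.length_cons, pow_succ']

lemma card_filter_mem_chainNbhd_le (hsymm : ∀ nb ∈ l, ∀ a b, b ∈ nb a ↔ a ∈ nb b)
    (h : ∀ nb ∈ l, ∀ a, #(nb a) ≤ d) (b : Fin n) :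
    #(univ.filter fun a => b ∈ chainNbhd l a) ≤ d ^ l.length := by
  induction l with
  | nil => simp [chainNbhd, filter_eq]
  | cons nb nbs ih =>
    have hsub : (univ.filter fun a => b ∈ chainNbhd (nb :: nbs) a) ⊆
        (univ.filter fun c => b ∈ chainNbhd nbs c).biUnion nb := by
      intro a ha
      obtain ⟨c, hc, hbc⟩ := mem_biUnion.1 (mem_filter.1 ha).2
      exact mem_biUnion.2 ⟨c, mem_filter.2 ⟨mem_univ c, hbc⟩, (hsymm nb (by simp) a c).1 hc⟩
    calc _ ≤ #((univ.filter fun c => b ∈ chainNbhd nbs c).biUnion nb) := card_le_card hsub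
      _ ≤ #(univ.filter fun c => b ∈ chainNbhd nbs c) * d :=
          card_biUnion_le_card_mul _ _ _ fun c _ => h nb (by simp) c
      _ ≤ d ^ nbs.length * d :=
          Nat.mul_le_mul_right _ (ih (fun nb' h' => hsymm nb' (by simp [h']))
            fun nb' h' => h nb' (by simp [h']))
      _ = d ^ (nb :: nbs).length := by rw [List.length_cons, pow_succ]

lemma card_filter_not_disjoint_biUnion_le {ι : Type*} [Fintype ι] (nb : Fin n → Finset (Fin n))
    (s : ι → Finset (Fin n)) {K K' D : ℕ} (hout : ∀ a, #(nb a) ≤ K)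
    (hin : ∀ b, #(univ.filter fun a => b ∈ nb a) ≤ K')
    (hD : ∀ a, #(univ.filter fun j => a ∈ s j) ≤ D) (i : ι) :
    #(univ.filter fun j => ¬ Disjoint ((s i).biUnion nb) ((s j).biUnion nb)) ≤
      #(s i) * K * (K' * D) := by
  have hsub : (univ.filter fun j => ¬ Disjoint ((s i).biUnion nb) ((s j).biUnion nb)) ⊆
      ((s i).biUnion nb).biUnion fun b => (univ.filter fun a => b ∈ nb a).biUnion
        fun a => univ.filter fun j => a ∈ s j := by
    intro j hj
    obtain ⟨b, hbi, hbj⟩ := not_disjoint_iff.1 (mem_filter.1 hj).2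
    obtain ⟨a, haj, hba⟩ := mem_biUnion.1 hbj
    refine mem_biUnion.2 ⟨b, hbi, mem_biUnion.2 ⟨a, ?_, ?_⟩⟩ <;> simpa
  calc _ ≤ _ := card_le_card hsub
    _ ≤ #((s i).biUnion nb) * (K' * D) := card_biUnion_le_card_mul _ _ _ fun b _ =>
        (card_biUnion_le_card_mul _ _ _ fun a _ => hD a).trans (Nat.mul_le_mul_right _ (hin b))
    _ ≤ #(s i) * K * (K' * D) :=
        Nat.mul_le_mul_right _ (card_biUnion_le_card_mul _ _ _ fun a _ => hout a)

lemma card_filter_mem_le_of_card_filter_not_disjoint_le {ι : Type*} [Fintype ι]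
    {s : ι → Finset (Fin n)} {D : ℕ}
    (hD : ∀ i, #(univ.filter fun j => ¬ Disjoint (s i) (s j)) ≤ D) (a : Fin n) :
    #(univ.filter fun j => a ∈ s j) ≤ D := by
  obtain ⟨i, hi⟩ | hempty := (univ.filter fun j => a ∈ s j).eq_empty_or_nonempty.symm
  · refine (card_le_card fun j hj => ?_).trans (hD i)
    simp only [mem_filter, mem_univ, true_and] at hi hj ⊢
    exact not_disjoint_iff.2 ⟨a, hi, hj⟩
  · simp [hempty]

lemma card_filter_not_disjoint_chainNbhd_le {ι : Type*} [Fintype ι]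
    (hsymm : ∀ nb ∈ l, ∀ a b, b ∈ nb a ↔ a ∈ nb b) (hcard : ∀ nb ∈ l, ∀ a, #(nb a) ≤ d)
    {s : ι → Finset (Fin n)} {ℓ D : ℕ} (hs : ∀ i, #(s i) ≤ ℓ)
    (hD : ∀ i, #(univ.filter fun j => ¬ Disjoint (s i) (s j)) ≤ D) (i : ι) :
    #(univ.filter fun j =>
        ¬ Disjoint ((s i).biUnion (chainNbhd l)) ((s j).biUnion (chainNbhd l))) ≤
      ℓ * d ^ l.length * (d ^ l.length * D) :=
  (card_filter_not_disjoint_biUnion_le _ s (card_chainNbhd_le hcard)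
    (card_filter_mem_chainNbhd_le hsymm hcard)
    (card_filter_mem_le_of_card_filter_not_disjoint_le hD) i).trans (by gcongr; exact hs i)

def circuitNbhd {α : Type*} {k : ℕ} (layers : Fin k → List (α × Finset (Fin n))) :
    Fin n → Finset (Fin n) :=
  chainNbhd (List.ofFn fun j => layerNbhd ((layers j).map Prod.snd))

end Neighbourhood

section Stochastic

variable {n : ℕ} {A : Fin n → Type*} [∀ i, Fintype (A i)] {M N : Matrix (∀ i, A i) (∀ i, A i) ℝ}

lemma IsStochastic.one_vecMul (hM : IsStochastic M) : 1 ᵥ* M = 1 := by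
  ext y
  simpa [vecMul, dotProduct] using hM.2 y

lemma isStochastic_one [DecidableEq (∀ i, A i)] :
    IsStochastic (1 : Matrix (∀ i, A i) (∀ i, A i) ℝ) :=
  ⟨fun x y => by rw [one_apply]; positivity, fun y => by simp [one_apply]⟩

lemma IsStochastic.mul (hM : IsStochastic M) (hN : IsStochastic N) : IsStochastic (M * N) := by
  refine ⟨fun x y => sum_nonneg fun z _ => mul_nonneg (hM.1 x z) (hN.1 z y), fun y => ?_⟩
  have h : 1 ᵥ* (M * N) = 1 := by rw [← vecMul_vecMul, hM.one_vecMul, hN.one_vecMul]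
  simpa [vecMul, dotProduct] using congrFun h y

lemma IsStochastic.list_prod [DecidableEq (∀ i, A i)] {l : List (Matrix (∀ i, A i) (∀ i, A i) ℝ)}
    (h : ∀ M ∈ l, IsStochastic M) : IsStochastic l.prod :=
  List.prod_induction _ (fun _ _ => IsStochastic.mul) isStochastic_one h

end Stochastic

section Gate

variable {n : ℕ} {A : Fin n → Type*} [∀ i, DecidableEq (A i)]
  {M : Matrix (∀ i, A i) (∀ i, A i) ℝ} {G S U : Finset (Fin n)} {F H : (∀ i, A i) → ℝ}

lemma CSupportedOn.eq_of_apply_ne_zero (hM : CSupportedOn M G) {x y : ∀ i, A i}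
    (hxy : M x y ≠ 0) : ∀ i ∉ G, x i = y i := by
  obtain ⟨f, hf⟩ := hM
  by_contra h
  simp [hf, h] at hxy

variable [∀ i, Fintype (A i)]

lemma vecMul_apply_eq_sum_updateFinset {f : (∀ i : G, A i) → (∀ i : G, A i) → ℝ}
    (hf : ∀ x y, M x y = f (G.restrict x) (G.restrict y) *
      (if ∀ i, i ∉ G → x i = y i then 1 else 0)) (F : (∀ i, A i) → ℝ) (y : ∀ i, A i) :
    (F ᵥ* M) y = ∑ w, F (updateFinset y G w) * f w (G.restrict y) := by
  simp only [vecMul, dotProduct, hf, mul_ite, mul_one, mul_zero, ← sum_filter]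
  refine sum_nbij' G.restrict (updateFinset y G) (by simp) (fun w _ => ?_) (fun x hx => ?_)
    (fun w _ => restrict_updateFinset y w) (fun x hx => ?_)
  · simp +contextual [updateFinset]
  · ext i
    by_cases hi : i ∈ G <;> simp_all [updateFinset]
  · congr
    ext i
    by_cases hi : i ∈ G <;> simp_all [updateFinset]

lemma CSupportedOn.dependsOn_vecMul (hM : CSupportedOn M G) (hF : DependsOn F S) :
    DependsOn (F ᵥ* M) (S ∪ G : Finset (Fin n)) := by
  obtain ⟨f, hf⟩ := hM
  intro y y' hyy'
  simp only [coe_union, Set.mem_union, mem_coe] at hyy'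
  rw [vecMul_apply_eq_sum_updateFinset hf, vecMul_apply_eq_sum_updateFinset hf]
  refine sum_congr rfl fun w _ => ?_
  have hG : G.restrict y = G.restrict y' := funext fun i => hyy' i (Or.inr i.2)
  rw [hG, hF fun i hi => ?_]
  by_cases hiG : i ∈ G <;> simp [updateFinset, hiG, hyy' i (Or.inl hi)]

lemma CSupportedOn.mul_vecMul (hM : CSupportedOn M G) (hH : DependsOn H U)
    (hUG : Disjoint U G) : (F * H) ᵥ* M = (F ᵥ* M) * H := by
  ext y
  simp only [vecMul, dotProduct, Pi.mul_apply, sum_mul]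
  refine sum_congr rfl fun x _ => ?_
  by_cases hxy : M x y = 0
  · simp [hxy]
  rw [hH fun i hi => hM.eq_of_apply_ne_zero hxy i (disjoint_left.1 hUG hi)]
  ring

lemma IsStochastic.vecMul_eq_self (hM : IsStochastic M) (hG : CSupportedOn M G)
    (hF : DependsOn F S) (hSG : Disjoint S G) : F ᵥ* M = F := by
  simpa [hM.one_vecMul] using hG.mul_vecMul (F := 1) hF hSG

end Gate

section Lightcone

variable {n : ℕ} {A : Fin n → Type*} [∀ i, Fintype (A i)]
  {M N : Matrix (∀ i, A i) (∀ i, A i) ℝ} {nb nb' : Fin n → Finset (Fin n)}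

structure HasLightcone (M : Matrix (∀ i, A i) (∀ i, A i) ℝ) (nb : Fin n → Finset (Fin n)) :
    Prop where
  dependsOn_vecMul {F : (∀ i, A i) → ℝ} {S : Finset (Fin n)} :
    DependsOn F S → DependsOn (F ᵥ* M) (S.biUnion nb : Finset (Fin n))
  mul_vecMul {F H : (∀ i, A i) → ℝ} {S U : Finset (Fin n)} : DependsOn F S → DependsOn H U →
    Disjoint (S.biUnion nb) (U.biUnion nb) → (F * H) ᵥ* M = (F ᵥ* M) * (H ᵥ* M)

lemma subset_biUnion_of_forall_mem (h : ∀ a, a ∈ nb a) (S : Finset (Fin n)) :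
    S ⊆ S.biUnion nb :=
  fun a ha => mem_biUnion.2 ⟨a, ha, h a⟩

lemma hasLightcone_one [DecidableEq (∀ i, A i)] (h : ∀ a, a ∈ nb a) :
    HasLightcone (1 : Matrix (∀ i, A i) (∀ i, A i) ℝ) nb where
  dependsOn_vecMul hF := by
    simpa only [vecMul_one] using hF.mono (coe_subset.2 (subset_biUnion_of_forall_mem h _))
  mul_vecMul _ _ _ := by simp only [vecMul_one]

lemma HasLightcone.mono (hM : HasLightcone M nb) (h : ∀ a, nb a ⊆ nb' a) :
    HasLightcone M nb' where
  dependsOn_vecMul hF :=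
    (hM.dependsOn_vecMul hF).mono (coe_subset.2 (biUnion_mono fun a _ => h a))
  mul_vecMul hF hH hSU :=
    hM.mul_vecMul hF hH (hSU.mono (biUnion_mono fun a _ => h a) (biUnion_mono fun a _ => h a))

lemma HasLightcone.mul (hM : HasLightcone M nb) (hN : HasLightcone N nb')
    (h : ∀ a, a ∈ nb' a) : HasLightcone (M * N) fun a => (nb a).biUnion nb' where
  dependsOn_vecMul hF := by
    rw [← vecMul_vecMul, ← biUnion_biUnion]
    exact hN.dependsOn_vecMul (hM.dependsOn_vecMul hF)
  mul_vecMul hF hH hSU := by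
    rw [← biUnion_biUnion, ← biUnion_biUnion] at hSU
    rw [← vecMul_vecMul, ← vecMul_vecMul, ← vecMul_vecMul,
      hM.mul_vecMul hF hH (hSU.mono (subset_biUnion_of_forall_mem h _)
        (subset_biUnion_of_forall_mem h _))]
    exact hN.mul_vecMul (hM.dependsOn_vecMul hF) (hM.dependsOn_vecMul hH) hSU

lemma HasLightcone.of_gate [∀ i, DecidableEq (A i)] {G : Finset (Fin n)} (hs : IsStochastic M)
    (hM : CSupportedOn M G) (hrefl : ∀ a, a ∈ nb a) (hG : ∀ a ∈ G, G ⊆ nb a) :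
    HasLightcone M nb := by
  have hcone : ∀ S : Finset (Fin n), ¬ Disjoint S G → G ⊆ S.biUnion nb := fun S hSG => by
    obtain ⟨a, haS, haG⟩ := not_disjoint_iff.1 hSG
    exact (hG a haG).trans (subset_biUnion_of_mem nb haS)
  refine ⟨fun {F S} hF => ?_, fun {F H S U} hF hH hSU => ?_⟩
  · by_cases hSG : Disjoint S G
    · rw [hs.vecMul_eq_self hM hF hSG]
      exact hF.mono (coe_subset.2 (subset_biUnion_of_forall_mem hrefl S))
    · exact (hM.dependsOn_vecMul hF).mono
        (coe_subset.2 (union_subset (subset_biUnion_of_forall_mem hrefl S) (hcone S hSG)))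
  · by_cases hSG : Disjoint S G
    · rw [hs.vecMul_eq_self hM hF hSG, mul_comm, hM.mul_vecMul hF hSG, mul_comm]
    · have hUG : Disjoint U G :=
        (hSU.mono (hcone S hSG) (subset_biUnion_of_forall_mem hrefl U)).symm
      rw [hs.vecMul_eq_self hM hH hUG, hM.mul_vecMul hH hUG]

lemma HasLightcone.ofFn_prod [DecidableEq (∀ i, A i)] {k : ℕ}
    {M : Fin k → Matrix (∀ i, A i) (∀ i, A i) ℝ}
    {nb : Fin k → Fin n → Finset (Fin n)} (hM : ∀ j, HasLightcone (M j) (nb j))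
    (hrefl : ∀ j a, a ∈ nb j a) : HasLightcone (List.ofFn M).prod (chainNbhd (List.ofFn nb)) := by
  induction k with
  | zero =>
    rw [List.ofFn_zero, List.ofFn_zero, List.prod_nil]
    exact hasLightcone_one mem_singleton_self
  | succ k ih =>
    rw [List.ofFn_succ, List.ofFn_succ, List.prod_cons]
    refine (hM 0).mul (ih (fun j => hM j.succ) fun j => hrefl j.succ) (self_mem_chainNbhd ?_)
    simp only [List.mem_ofFn]
    rintro _ ⟨j, rfl⟩
    exact hrefl j.succ

lemma HasLightcone.covar_eq_zero {nb : Fin n → Finset (Fin n)} (hM : HasLightcone M nb)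
    (x0 : ∀ i, A i) {F H : (∀ i, A i) → ℝ} {S U : Finset (Fin n)} (hF : DependsOn F S)
    (hH : DependsOn H U) (hSU : Disjoint (S.biUnion nb) (U.biUnion nb)) :
    covar (fun x => M x x0) F H = 0 := by
  have h := congrFun (hM.mul_vecMul hF hH hSU) x0
  simp only [vecMul, dotProduct, Pi.mul_apply] at h
  simp only [covar, mul_comm (M _ x0), h, sub_self]

end Lightcone

section Circuit

variable {n : ℕ} {A : Fin n → Type*} [∀ i, Fintype (A i)] [∀ i, DecidableEq (A i)]
  {M : Matrix (∀ i, A i) (∀ i, A i) ℝ}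
  {gates : List (Matrix (∀ i, A i) (∀ i, A i) ℝ × Finset (Fin n))}

lemma CIsLayer.isStochastic (h : CIsLayer M gates) : IsStochastic M := by
  obtain ⟨rfl, hgates, -⟩ := h
  refine IsStochastic.list_prod fun M hM => ?_
  obtain ⟨g, hg, rfl⟩ := List.mem_map.1 hM
  exact (hgates g hg).1

lemma CIsLayer.card_layerNbhd_le (h : CIsLayer M gates) (a : Fin n) :
    #(layerNbhd (gates.map Prod.snd) a) ≤ 2 := by
  obtain ⟨-, hgates, hdisj⟩ := h
  refine _root_.card_layerNbhd_le (List.pairwise_map.2 hdisj) (fun G hG => ?_) a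
  obtain ⟨g, hg, rfl⟩ := List.mem_map.1 hG
  exact (hgates g hg).2.2

lemma HasLightcone.of_isLayer (h : CIsLayer M gates) :
    HasLightcone M (layerNbhd (gates.map Prod.snd)) := by
  obtain ⟨rfl, hgates, hdisj⟩ := h
  have hpw : (gates.map Prod.snd).Pairwise Disjoint := List.pairwise_map.2 hdisj
  refine List.prod_induction (fun N => HasLightcone N (layerNbhd (gates.map Prod.snd)))
    (fun M N hM hN => (hM.mul hN (self_mem_layerNbhd _)).mono
      fun a => biUnion_subset.2 fun b hb => layerNbhd_subset_of_mem hpw hb)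
    (hasLightcone_one (self_mem_layerNbhd _)) ?_
  simp only [List.mem_map]
  rintro _ ⟨g, hg, rfl⟩
  exact .of_gate (hgates g hg).1 (hgates g hg).2.1 (self_mem_layerNbhd _)
    fun a ha => subset_layerNbhd (List.mem_map_of_mem (f := Prod.snd) hg) ha

variable {k : ℕ} {Ms : Fin k → Matrix (∀ i, A i) (∀ i, A i) ℝ}
  {layers : Fin k → List (Matrix (∀ i, A i) (∀ i, A i) ℝ × Finset (Fin n))}

lemma IsStochastic.ofFn_prod_of_isLayer (hM : ∀ j, CIsLayer (Ms j) (layers j)) :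
    IsStochastic (List.ofFn Ms).prod :=
  .list_prod <| by simpa [List.mem_ofFn] using fun j => (hM j).isStochastic

lemma HasLightcone.ofFn_prod_of_isLayer (hM : ∀ j, CIsLayer (Ms j) (layers j)) :
    HasLightcone (List.ofFn Ms).prod (circuitNbhd layers) :=
  .ofFn_prod (fun j => .of_isLayer (hM j)) fun _ => self_mem_layerNbhd _

lemma card_filter_not_disjoint_circuitNbhd_le (hM : ∀ j, CIsLayer (Ms j) (layers j))
    {m ℓ D : ℕ} {s : Fin m → Finset (Fin n)} (hs : ∀ i, #(s i) ≤ ℓ)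
    (hD : ∀ i, #(univ.filter fun j => ¬ Disjoint (s i) (s j)) ≤ D) (i : Fin m) :
    #(univ.filter fun j =>
        ¬ Disjoint ((s i).biUnion (circuitNbhd layers)) ((s j).biUnion (circuitNbhd layers))) ≤
      ℓ * 2 ^ k * (2 ^ k * D) := by
  have h := card_filter_not_disjoint_chainNbhd_le (d := 2)
    (l := List.ofFn fun j => layerNbhd ((layers j).map Prod.snd)) ?_ ?_ hs hD i
  · rwa [List.length_ofFn] at h
  all_goals simp only [List.mem_ofFn]; rintro _ ⟨j, rfl⟩
  exacts [fun a b => mem_layerNbhd_comm, (hM j).card_layerNbhd_le]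

end Circuit

/-- Classical analogue for shallow Markov chains: if `q` is obtained from a point mass by
`k` layers of two-coordinate stochastic maps, then for a linear functional
`L(q) = ∑ᵢ p_{sᵢ} E_q[f_{sᵢ}]` with `|f_{sᵢ}| ≤ 1`, supports of size at most `ℓ`, each
intersecting at most `D` others, the single-sample empirical estimator
`Y(x) = ∑ᵢ p_{sᵢ} f_{sᵢ}(x)` is unbiased and has variance at most
`C(k,ℓ,D) ∑ᵢ p_{sᵢ}²` with `C` independent of `n`. -/
theorem stmt18 : ∃ C : ℕ → ℕ → ℕ → ℝ,
    ∀ (n : ℕ) (A : Fin n → Type) [∀ i, Fintype (A i)] [∀ i, DecidableEq (A i)],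
    ∀ (k : ℕ) (M : Fin k → Matrix (∀ i, A i) (∀ i, A i) ℝ),
      (∀ j, ∃ gates, CIsLayer (M j) gates) →
    ∀ x0 : ∀ i, A i,
    ∀ (m ℓ D : ℕ) (s : Fin m → Finset (Fin n)) (p : Fin m → ℝ)
      (f : Fin m → (∀ i, A i) → ℝ),
      (∀ i, (s i).card ≤ ℓ) →
      (∀ i, (Finset.univ.filter (fun j => ¬ Disjoint (s i) (s j))).card ≤ D) →
      (∀ i x y, (∀ j ∈ s i, x j = y j) → f i x = f i y) →
      (∀ i x, |f i x| ≤ 1) →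
      let q : (∀ i, A i) → ℝ :=
        ((List.ofFn M).prod).mulVec (fun x => if x = x0 then 1 else 0)
      let L : ℝ := ∑ i, p i * ∑ x, q x * f i x
      let Y : (∀ i, A i) → ℝ := fun x => ∑ i, p i * f i x
      (∑ x, q x * Y x = L) ∧
      (∑ x, q x * (Y x - L) ^ 2 ≤ C k ℓ D * ∑ i, (p i) ^ 2) := by
  refine ⟨fun k ℓ D => 2 * (ℓ * 2 ^ k * (2 ^ k * D) : ℕ), ?_⟩
  intro n A _ _ k M hM x0 m ℓ D s p f hs hD hf hf1 q L Y
  choose gates hgates using hM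
  have hP := HasLightcone.ofFn_prod_of_isLayer hgates
  have hPs := IsStochastic.ofFn_prod_of_isLayer hgates
  have hq : q = fun x => (List.ofFn M).prod x x0 := by
    ext x; simp [q, mulVec, dotProduct]
  refine ⟨sum_mul_sum_mul_comm q p f, ?_⟩
  simp only [Y, L, hq]
  exact sum_mul_sub_sq_le (fun x => hPs.1 x x0) (hPs.2 x0) p hf1 (fun i j h h' => h h'.symm)
    (fun i j h => hP.covar_eq_zero x0 (fun _ _ => hf i _ _) (fun _ _ => hf j _ _) (not_not.1 h))
    (card_filter_not_disjoint_circuitNbhd_le hgates hs hD)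
end
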